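/- Let A, R be elements of an associative unital algebra over ℚ, k a nonzero scalar such that A + k is invertible. Then the following identity holds: (A+k)^{-1} = 1/(2k) + (1/(6k²))(k − A − R) + (1/(4k²))R + (1/(4k²))(A+k)^{-1}(k−A)R + (1/(18k³))(2k−A)(k−A−R) + (1/(36k⁴))(2k−A)²(k−A−R) + (1/(36k⁴))(A+k)^{-1}(k−A)(2k−A)²(k−A−R). -/
import Mathlib


/-- The 7-term resolvent expansion of `(A+k)⁻¹` (Lemma 3.1 of the paper),
valid in any associative unital algebra over `ℚ` with `k` a nonzero scalar,
`A`, `R` arbitrary elements, and `G` a two-sided inverse of `A + k•1`. -/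
theorem stmt_1 {S : Type*} [Ring S] [Algebra ℚ S]
    (A R G : S) (k : ℚ) (hk : k ≠ 0)
    (h1 : (A + k • (1 : S)) * G = 1) (h2 : G * (A + k • (1 : S)) = 1) :
    G = (2*k)⁻¹ • (1 : S)
        + (6*k^2)⁻¹ • (k • (1:S) - A - R)
        + (4*k^2)⁻¹ • R
        + (4*k^2)⁻¹ • (G * ((k • (1:S) - A) * R))
        + (18*k^3)⁻¹ • (((2*k) • (1:S) - A) * (k • (1:S) - A - R))
        + (36*k^4)⁻¹ • ((((2*k) • (1:S) - A)^2) * (k • (1:S) - A - R))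
        + (36*k^4)⁻¹ •
            (G * ((k • (1:S) - A) * ((((2*k) • (1:S) - A)^2) * (k • (1:S) - A - R)))) := by
  set E := (2*k)⁻¹ • (1 : S)
        + (6*k^2)⁻¹ • (k • (1:S) - A - R)
        + (4*k^2)⁻¹ • R
        + (4*k^2)⁻¹ • (G * ((k • (1:S) - A) * R))
        + (18*k^3)⁻¹ • (((2*k) • (1:S) - A) * (k • (1:S) - A - R))
        + (36*k^4)⁻¹ • ((((2*k) • (1:S) - A)^2) * (k • (1:S) - A - R))
        + (36*k^4)⁻¹ •
            (G * ((k • (1:S) - A) * ((((2*k) • (1:S) - A)^2) * (k • (1:S) - A - R)))) with hE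
  have key : (A + k • (1 : S)) * E = 1 := by
    rw [hE]
    simp only [mul_add, mul_smul_comm, ← mul_assoc, h1, one_mul]
    simp only [pow_two, sub_mul, mul_sub, mul_add, add_mul, smul_mul_assoc,
      mul_smul_comm, one_mul, mul_one, smul_smul, mul_assoc]
    match_scalars <;> field_simp <;> ring
  calc G = G * ((A + k • (1 : S)) * E) := by rw [key, mul_one]
    _ = E := by rw [← mul_assoc, h2, one_mul]
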